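/- arXiv:2312.08221 — 2 statements merged into one kernel-verified Lean document; each statement's English description precedes it below -/
import Mathlib

section
/- Let A and B be d×n real matrices and suppose B·Aᵀ = U·Σ·Vᵀ where U and V are d×d orthogonal matrices (UᵀU = VᵀV = I_d) and Σ is a d×d diagonal matrix with nonnegative diagonal entries. Then for every d×d real matrix Q with QᵀQ = I_d one has ‖(U·Vᵀ)·A − B‖_F ≤ ‖Q·A − B‖_F; that is, Q* = U·Vᵀ minimizes ‖QA − B‖_F over all orthogonal Q. -/
open Matrix

noncomputable def frobNorm {m k : ℕ} (A : Matrix (Fin m) (Fin k) ℝ) : ℝ :=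
  Real.sqrt ((Aᵀ * A).trace)

-- expansion lemma
lemma expand {d n : ℕ} (A B : Matrix (Fin d) (Fin n) ℝ) (Q : Matrix (Fin d) (Fin d) ℝ)
    (hQ : Qᵀ * Q = 1) :
    ((Q * A - B)ᵀ * (Q * A - B)).trace
      = (Aᵀ * A).trace + (Bᵀ * B).trace - 2 * (Qᵀ * (B * Aᵀ)).trace := by
  have h1 : (Q * A)ᵀ * (Q * A) = Aᵀ * A := by
    rw [transpose_mul, Matrix.mul_assoc, ← Matrix.mul_assoc Qᵀ, hQ, Matrix.one_mul]
  have h2 : ((Q * A)ᵀ * B).trace = (Qᵀ * (B * Aᵀ)).trace := by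
    rw [transpose_mul, Matrix.mul_assoc, ← Matrix.trace_mul_comm, ← Matrix.mul_assoc]
  have h3 : (Bᵀ * (Q * A)).trace = (Qᵀ * (B * Aᵀ)).trace := by
    rw [← Matrix.trace_transpose (Bᵀ * (Q * A)), transpose_mul, transpose_transpose, h2]
  rw [transpose_sub, Matrix.sub_mul, Matrix.mul_sub, Matrix.mul_sub, h1]
  simp only [Matrix.trace_sub]
  rw [h2, h3]
  ring

lemma trace_nonneg {d n : ℕ} (M : Matrix (Fin d) (Fin n) ℝ) : 0 ≤ (Mᵀ * M).trace := by
  simp only [Matrix.trace, Matrix.diag_apply, Matrix.mul_apply, Matrix.transpose_apply]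
  apply Finset.sum_nonneg; intro i _
  apply Finset.sum_nonneg; intro j _
  exact mul_self_nonneg _

lemma diag_le_one {d : ℕ} (Z : Matrix (Fin d) (Fin d) ℝ) (hZ : Zᵀ * Z = 1) (i : Fin d) :
    Z i i ≤ 1 := by
  have h : ∑ j, Z j i * Z j i = 1 := by
    have := congrFun (congrFun hZ i) i
    simpa [Matrix.mul_apply, Matrix.one_apply] using this
  have hle : Z i i * Z i i ≤ ∑ j, Z j i * Z j i :=
    Finset.single_le_sum (f := fun j => Z j i * Z j i)
      (fun j _ => mul_self_nonneg _) (Finset.mem_univ i)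
  nlinarith [hle, h]

/-- Lemma 1 of the paper (orthogonal Procrustes problem): if `B·Aᵀ = U·Σ·Vᵀ`
with `U, V` orthogonal and `Σ` diagonal with nonnegative entries, then
`Q* = U·Vᵀ` minimizes `‖Q·A − B‖_F` over all orthogonal `Q`. -/
theorem orthogonal_procrustes
    (d n : ℕ) (A B : Matrix (Fin d) (Fin n) ℝ)
    (U V : Matrix (Fin d) (Fin d) ℝ) (σ : Fin d → ℝ)
    (hU : Uᵀ * U = 1) (hV : Vᵀ * V = 1) (hσ : ∀ i, 0 ≤ σ i)
    (hSVD : B * Aᵀ = U * Matrix.diagonal σ * Vᵀ) :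
    ∀ Q : Matrix (Fin d) (Fin d) ℝ, Qᵀ * Q = 1 →
      frobNorm ((U * Vᵀ) * A - B) ≤ frobNorm (Q * A - B) := by
  intro Q hQ
  have hVV : V * Vᵀ = 1 := mul_eq_one_comm.mp hV
  have hUVt : (U * Vᵀ)ᵀ * (U * Vᵀ) = 1 := by
    rw [transpose_mul, transpose_transpose]
    calc V * Uᵀ * (U * Vᵀ) = V * (Uᵀ * U) * Vᵀ := by simp only [Matrix.mul_assoc]
      _ = 1 := by rw [hU, Matrix.mul_one, hVV]
  -- trace at optimum
  have topt : ((U * Vᵀ)ᵀ * (B * Aᵀ)).trace = ∑ i, σ i := by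
    rw [hSVD, transpose_mul, transpose_transpose]
    have : V * Uᵀ * (U * Matrix.diagonal σ * Vᵀ) = V * Matrix.diagonal σ * Vᵀ := by
      simp only [Matrix.mul_assoc]
      rw [← Matrix.mul_assoc Uᵀ U, hU, Matrix.one_mul]
    rw [this, Matrix.trace_mul_cycle, hV, Matrix.one_mul, Matrix.trace_diagonal]
  -- trace bound for general Q
  have tQ : (Qᵀ * (B * Aᵀ)).trace ≤ ∑ i, σ i := by
    rw [hSVD]
    set Z := Vᵀ * Qᵀ * U with hZdef
    have hcyc : (Qᵀ * (U * Matrix.diagonal σ * Vᵀ)).trace = (Z * Matrix.diagonal σ).trace := by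
      rw [hZdef]
      rw [show Qᵀ * (U * Matrix.diagonal σ * Vᵀ) = Qᵀ * (U * Matrix.diagonal σ) * Vᵀ by
        simp only [Matrix.mul_assoc]]
      rw [Matrix.trace_mul_comm, ← Matrix.mul_assoc, ← Matrix.mul_assoc]
    have hZorth : Zᵀ * Z = 1 := by
      have hQQ : Q * Qᵀ = 1 := mul_eq_one_comm.mp hQ
      have hVV : V * Vᵀ = 1 := mul_eq_one_comm.mp hV
      rw [hZdef]
      simp only [transpose_mul, transpose_transpose]
      calc Uᵀ * (Q * V) * (Vᵀ * Qᵀ * U)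
          = Uᵀ * (Q * (V * Vᵀ) * Qᵀ) * U := by
            simp only [Matrix.mul_assoc]
        _ = 1 := by rw [hVV, Matrix.mul_one, hQQ, Matrix.mul_one, hU]
    rw [hcyc]
    have : (Z * Matrix.diagonal σ).trace = ∑ i, Z i i * σ i := by
      simp [Matrix.trace, Matrix.diag_apply, Matrix.mul_apply, Matrix.diagonal]
    rw [this]
    apply Finset.sum_le_sum
    intro i _
    have := diag_le_one Z hZorth i
    nlinarith [hσ i]
  -- combine
  unfold frobNorm
  apply Real.sqrt_le_sqrt
  rw [expand A B Q hQ, expand A B (U * Vᵀ) hUVt, topt]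
  linarith
end

section
/- Let Ā be a symmetric real n×n matrix, X a fixed n×d real matrix, and let a, b, c be nonnegative reals with a > 0 and a + b + c = 1. Define f : ℝ^{n×d} → ℝ by f(H) = (1/2)·trace(Hᵀ·(Ā − I_n)·H) − (c/(2a))·‖H − X‖_F². Then f is Fréchet differentiable with gradient (with respect to the Frobenius inner product) G(H) = (Ā − I_n)·H − (c/a)·(H − X), and the gradient-ascent step with step size η = a satisfies H + a·G(H) = a·Ā·H + b·H + c·X. -/
/-! Both terms of the objective are quadratic forms `H ↦ β H H` of continuous bilinear forms on
the finite-dimensional space of matrices (for the penalty, via `‖A‖_F² = tr (AᵀA)`), so their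
derivative at `H` is `K ↦ β H K + β K H`; for `β A B = tr (Aᵀ N B)` this is `⟨K, (N + Nᵀ) H⟩_F`,
i.e. `⟨K, 2 N H⟩_F` when `N` is symmetric. The ascent step is then linear algebra, using
`a · (c / a) = c` and `b = 1 - a - c`. -/

open Matrix

attribute [local instance] Matrix.frobeniusNormedAddCommGroup Matrix.frobeniusNormedSpace

theorem ContinuousLinearMap.hasFDerivAt_apply_self {𝕜 E F : Type*} [NontriviallyNormedField 𝕜]
    [NormedAddCommGroup E] [NormedSpace 𝕜 E] [NormedAddCommGroup F] [NormedSpace 𝕜 F]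
    (β : E →L[𝕜] E →L[𝕜] F) (x : E) :
    HasFDerivAt (fun y => β y y) (β x + β.flip x) x := by
  refine (β.hasFDerivAt_of_bilinear (hasFDerivAt_id x) (hasFDerivAt_id x)).congr_fderiv ?_
  ext K
  simp

theorem gradient_step_eq_affine_combination {K E : Type*} [Field K] [AddCommGroup E] [Module K E]
    {a b c : K} (ha : a ≠ 0) (habc : a + b + c = 1) (u h x : E) :
    h + a • (u - h - (c / a) • (h - x)) = a • u + b • h + c • x := by
  obtain rfl : c = 1 - a - b := by linear_combination habc
  rw [smul_sub, smul_smul, mul_div_cancel₀ _ ha]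
  module

namespace Matrix

variable {m n : Type*} [Fintype m] [Fintype n]

theorem frobenius_norm_sq_eq_trace (A : Matrix m n ℝ) : ‖A‖ ^ 2 = (Aᵀ * A).trace := by
  rw [frobenius_norm_def, ← Real.rpow_natCast, ← Real.rpow_mul (by positivity)]
  simp [trace, mul_apply, Finset.sum_comm (γ := m), sq]

/-- `K ↦ ⟨K, G⟩_F`. The topology in its type is the product one, which agrees with the Frobenius
topology only after unfolding: hence the `change`s where it meets `HasFDerivAt`. -/
noncomputable def frobeniusInnerCLM (G : Matrix m n ℝ) : Matrix m n ℝ →L[ℝ] ℝ :=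
  LinearMap.toContinuousLinearMap
    { toFun := fun K => (Kᵀ * G).trace
      map_add' := fun K L => by simp [Matrix.add_mul]
      map_smul' := fun r K => by simp }

noncomputable def traceFormCLM (N : Matrix m m ℝ) : Matrix m n ℝ →L[ℝ] Matrix m n ℝ →L[ℝ] ℝ :=
  (LinearMap.mk₂ ℝ (fun A B => (Aᵀ * (N * B)).trace)
    (fun _ _ _ => by simp [Matrix.add_mul])
    (fun _ _ _ => by simp)
    (fun _ _ _ => by simp [Matrix.mul_add])
    (fun _ _ _ => by simp)).toContinuousBilinearMap

theorem hasFDerivAt_trace_transpose_mul_mul (N : Matrix m m ℝ) (H : Matrix m n ℝ) :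
    HasFDerivAt (fun H : Matrix m n ℝ => (Hᵀ * (N * H)).trace)
      (frobeniusInnerCLM ((N + Nᵀ) * H)) H := by
  refine ((traceFormCLM N).hasFDerivAt_apply_self H).congr_fderiv
    (ContinuousLinearMap.ext fun K => ?_)
  change (Hᵀ * (N * K)).trace + (Kᵀ * (N * H)).trace = (Kᵀ * ((N + Nᵀ) * H)).trace
  have h : (Hᵀ * (N * K)).trace = (Kᵀ * (Nᵀ * H)).trace := by
    rw [← trace_transpose]
    simp [transpose_mul, Matrix.mul_assoc]
  rw [h, Matrix.add_mul, Matrix.mul_add, trace_add, add_comm]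

theorem hasFDerivAt_frobenius_norm_sub_sq (X H : Matrix m n ℝ) :
    HasFDerivAt (fun H : Matrix m n ℝ => ‖H - X‖ ^ 2)
      (frobeniusInnerCLM ((2 : ℝ) • (H - X))) H := by
  classical
  have h := (hasFDerivAt_trace_transpose_mul_mul 1 (H - X)).comp H ((hasFDerivAt_id H).sub_const X)
  refine (h.congr_fderiv (ContinuousLinearMap.ext fun K => ?_)).congr_of_eventuallyEq
    (Filter.Eventually.of_forall fun H => ?_)
  · change (Kᵀ * ((1 + (1 : Matrix m m ℝ)ᵀ) * (H - X))).trace = (Kᵀ * ((2 : ℝ) • (H - X))).trace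
    rw [transpose_one, ← two_smul ℝ, Matrix.smul_mul, Matrix.one_mul]
  · change ‖H - X‖ ^ 2 = ((H - X)ᵀ * ((1 : Matrix m m ℝ) * (H - X))).trace
    rw [Matrix.one_mul, frobenius_norm_sq_eq_trace]

end Matrix

theorem residual_graphAIN_gradient_ascent_step_general
    (n d : ℕ) (Abar : Matrix (Fin n) (Fin n) ℝ) (hAbar : Abar.IsSymm)
    (X : Matrix (Fin n) (Fin d) ℝ)
    (a b c : ℝ) (ha : 0 < a) (habc : a + b + c = 1) :
    (∀ H : Matrix (Fin n) (Fin d) ℝ,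
        ∃ L : Matrix (Fin n) (Fin d) ℝ →L[ℝ] ℝ,
          (∀ K : Matrix (Fin n) (Fin d) ℝ,
              L K = (Kᵀ * ((Abar - 1) * H - (c / a) • (H - X))).trace) ∧
            HasFDerivAt
              (fun H : Matrix (Fin n) (Fin d) ℝ =>
                (1 / 2 : ℝ) * (Hᵀ * ((Abar - 1) * H)).trace
                  - (c / (2 * a)) * ‖H - X‖ ^ 2) L H) ∧
      ∀ H : Matrix (Fin n) (Fin d) ℝ,
        H + a • ((Abar - 1) * H - (c / a) • (H - X))
          = a • (Abar * H) + b • H + c • X := by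
  refine ⟨fun H => ⟨_, fun K => ?_,
    ((hasFDerivAt_trace_transpose_mul_mul (Abar - 1) H).const_mul (1 / 2)).sub
      ((hasFDerivAt_frobenius_norm_sub_sq X H).const_mul (c / (2 * a)))⟩, fun H => ?_⟩
  · have hM : (Abar - 1)ᵀ = Abar - 1 := by rw [transpose_sub, transpose_one, hAbar.eq]
    change 1 / 2 * (Kᵀ * ((Abar - 1 + (Abar - 1)ᵀ) * H)).trace
        - c / (2 * a) * (Kᵀ * ((2 : ℝ) • (H - X))).trace = _
    simp only [hM, ← two_smul ℝ (Abar - 1), Matrix.smul_mul, Matrix.mul_smul, Matrix.mul_sub,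
      trace_sub, trace_smul, smul_eq_mul]
    field_simp
  · rw [Matrix.sub_mul, Matrix.one_mul]
    exact gradient_step_eq_affine_combination ha.ne' habc _ _ _

/-- Analytic content of Theorem 3 of the paper: with the Frobenius norm on
`n×d` real matrices, the residual-favored objective
`f(H) = (1/2)·trace(Hᵀ(Ā−I)H) − (c/(2a))·‖H−X‖_F²` is Fréchet differentiable
with gradient `G(H) = (Ā−I)H − (c/a)(H−X)` (w.r.t. the Frobenius inner
product), and the gradient-ascent step with step size `a` is
`H + a·G(H) = a·ĀH + b·H + c·X`, where `a,b,c ≥ 0`, `a > 0`, `a+b+c = 1`. -/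
theorem residual_graphAIN_gradient_ascent_step
    (n d : ℕ) (Abar : Matrix (Fin n) (Fin n) ℝ) (hAbar : Abar.IsSymm)
    (X : Matrix (Fin n) (Fin d) ℝ)
    (a b c : ℝ) (ha : 0 < a) (hb : 0 ≤ b) (hc : 0 ≤ c) (habc : a + b + c = 1) :
    (∀ H : Matrix (Fin n) (Fin d) ℝ,
        ∃ L : Matrix (Fin n) (Fin d) ℝ →L[ℝ] ℝ,
          (∀ K : Matrix (Fin n) (Fin d) ℝ,
              L K = (Kᵀ * ((Abar - 1) * H - (c / a) • (H - X))).trace) ∧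
            HasFDerivAt
              (fun H : Matrix (Fin n) (Fin d) ℝ =>
                (1 / 2 : ℝ) * (Hᵀ * ((Abar - 1) * H)).trace
                  - (c / (2 * a)) * ‖H - X‖ ^ 2) L H) ∧
      ∀ H : Matrix (Fin n) (Fin d) ℝ,
        H + a • ((Abar - 1) * H - (c / a) • (H - X))
          = a • (Abar * H) + b • H + c • X :=
  residual_graphAIN_gradient_ascent_step_general n d Abar hAbar X a b c ha habc
end
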